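/- On an η-Einstein Kenmotsu manifold of dimension 2n+1 > 3, the gradient of the scalar curvature r satisfies Dr = ξ(r)ξ, i.e., X(r) = η(X)ξ(r) for all vector fields X. -/

import Mathlib

/-- An abstract algebraic model of a `(2n+1)`-dimensional Kenmotsu manifold:
`C` plays the role of the ring of smooth functions on the manifold and vector
fields are modelled as `ℝ`-derivations of `C`.  A global orthonormal frame `e`
is included in order to express traces (Ricci tensor, scalar curvature). -/
structure KenmotsuManifold (n : ℕ) (C : Type*) [CommRing C] [Algebra ℝ C] where
  /-- the Riemannian metric -/
  g : Derivation ℝ C C → Derivation ℝ C C → C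
  /-- the structure `(1,1)`-tensor field -/
  φ : Derivation ℝ C C → Derivation ℝ C C
  /-- the Reeb (characteristic) vector field -/
  ξ : Derivation ℝ C C
  /-- the contact `1`-form -/
  η : Derivation ℝ C C → C
  /-- the Levi-Civita connection -/
  nabla : Derivation ℝ C C → Derivation ℝ C C → Derivation ℝ C C
  /-- a global orthonormal frame, used to take traces -/
  e : Fin (2 * n + 1) → Derivation ℝ C C
  g_symm : ∀ X Y, g X Y = g Y X
  g_add_left : ∀ X Y Z, g (X + Y) Z = g X Z + g Y Z
  g_smul_left : ∀ (f : C) (X Y), g (f • X) Y = f * g X Y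
  g_nondeg : ∀ X, (∀ Y, g X Y = 0) → X = 0
  g_frame : ∀ i j, g (e i) (e j) = if i = j then 1 else 0
  frame_span : ∀ X : Derivation ℝ C C, X = ∑ i, g X (e i) • e i
  phi_phi : ∀ X, φ (φ X) = -X + η X • ξ
  phi_linear : ∀ (f : C) (X Y), φ (f • X + Y) = f • φ X + φ Y
  eta_xi : η ξ = 1
  eta_def : ∀ X, η X = g X ξ
  compat_phi : ∀ X Y, g (φ X) (φ Y) = g X Y - η X * η Y
  nabla_add_left : ∀ X Y Z, nabla (X + Y) Z = nabla X Z + nabla Y Z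
  nabla_smul_left : ∀ (f : C) (X Y), nabla (f • X) Y = f • nabla X Y
  nabla_add_right : ∀ X Y Z, nabla X (Y + Z) = nabla X Y + nabla X Z
  nabla_leibniz : ∀ (X) (f : C) (Y), nabla X (f • Y) = X f • Y + f • nabla X Y
  torsion_free : ∀ X Y, nabla X Y - nabla Y X = ⁅X, Y⁆
  metric_compat : ∀ X Y Z, X (g Y Z) = g (nabla X Y) Z + g Y (nabla X Z)
  /-- the Kenmotsu condition `(∇_X φ)Y = g(φX,Y)ξ - η(Y)φX` -/
  kenmotsu : ∀ X Y, nabla X (φ Y) - φ (nabla X Y) = g (φ X) Y • ξ - η Y • φ X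

namespace KenmotsuManifold

variable {n : ℕ} {C : Type*} [CommRing C] [Algebra ℝ C] (K : KenmotsuManifold n C)

/-- the Riemann curvature tensor `R(X,Y)Z = ∇_X∇_Y Z - ∇_Y∇_X Z - ∇_{[X,Y]}Z` -/
def Rm (X Y Z : Derivation ℝ C C) : Derivation ℝ C C :=
  K.nabla X (K.nabla Y Z) - K.nabla Y (K.nabla X Z) - K.nabla ⁅X, Y⁆ Z

/-- the Ricci tensor `S(X,Y) = trace (Z ↦ R(Z,X)Y)` -/
def S (X Y : Derivation ℝ C C) : C := ∑ i, K.g (K.Rm (K.e i) X Y) (K.e i)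

/-- the Ricci operator `Q`, `g(QX,Y) = S(X,Y)` -/
def Q (X : Derivation ℝ C C) : Derivation ℝ C C := ∑ i, K.S X (K.e i) • K.e i

/-- the scalar curvature `r` -/
def r : C := ∑ i, K.S (K.e i) (K.e i)

/-- the `*`-Ricci tensor `S*(X,Y) = (1/2) trace (Z ↦ R(X,φY)φZ)` -/
noncomputable def Sstar (X Y : Derivation ℝ C C) : C :=
  (2 : ℝ)⁻¹ • ∑ i, K.g (K.Rm X (K.φ Y) (K.φ (K.e i))) (K.e i)

/-- the covariant derivative `(∇_X Q)Y` of the Ricci operator -/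
def nablaQ (X Y : Derivation ℝ C C) : Derivation ℝ C C :=
  K.nabla X (K.Q Y) - K.Q (K.nabla X Y)

/-- the Lie derivative `(£_V g)(X,Y)` of the metric -/
def lieG (V X Y : Derivation ℝ C C) : C :=
  V (K.g X Y) - K.g ⁅V, X⁆ Y - K.g X ⁅V, Y⁆

/-- the Lie derivative `(£_V S)(X,Y)` of the Ricci tensor -/
def lieS (V X Y : Derivation ℝ C C) : C :=
  V (K.S X Y) - K.S ⁅V, X⁆ Y - K.S X ⁅V, Y⁆

/-- `g` is a `*`-Ricci soliton with potential vector field `V` and soliton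
constant `l`: `£_V g + 2S* + 2l g = 0`. -/
def IsStarRicciSoliton (V : Derivation ℝ C C) (l : ℝ) : Prop :=
  ∀ X Y, K.lieG V X Y + 2 * K.Sstar X Y + (2 * l) • K.g X Y = 0

/-- `g` is a gradient almost `*`-Ricci soliton with potential function `f`
(with gradient `F`, i.e. `g(F,X) = Xf`) and soliton function `l`:
`Hess f + S* + l g = 0`. -/
def IsGradAlmostStarRicciSoliton (f : C) (F : Derivation ℝ C C) (l : C) : Prop :=
  (∀ X, K.g F X = X f) ∧ ∀ X Y, K.g (K.nabla X F) Y + K.Sstar X Y + l * K.g X Y = 0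

/-- `M` is `η`-Einstein: `S = α g + β η⊗η`. -/
def IsEtaEinstein : Prop :=
  ∃ α β : C, ∀ X Y, K.S X Y = α * K.g X Y + β * (K.η X * K.η Y)


section Aux

variable {n : ℕ} {C : Type*} [CommRing C] [Algebra ℝ C] (K : KenmotsuManifold n C)

/-- cancel `a • x = 0` for a nonzero real scalar -/
lemma real_cancel {a : ℝ} (ha : a ≠ 0) {x : C} (h : a • x = 0) : x = 0 := by
  have := congrArg (fun y => a⁻¹ • y) h
  simpa [smul_smul, inv_mul_cancel₀ ha] using this

lemma half_cancel {x : C} (h : x + x = 0) : x = 0 := by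
  refine real_cancel (two_ne_zero) (x := x) ?_
  rw [two_smul]; exact h

lemma g_add_right (X Y Z : Derivation ℝ C C) : K.g X (Y + Z) = K.g X Y + K.g X Z := by
  rw [K.g_symm, K.g_add_left, K.g_symm Y, K.g_symm Z]

lemma g_smul_right (f : C) (X Y : Derivation ℝ C C) : K.g X (f • Y) = f * K.g X Y := by
  rw [K.g_symm, K.g_smul_left, K.g_symm]

lemma g_zero_left (Y : Derivation ℝ C C) : K.g 0 Y = 0 := by
  have := K.g_smul_left 0 0 Y
  simpa using this

lemma g_zero_right (Y : Derivation ℝ C C) : K.g Y 0 = 0 := by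
  rw [K.g_symm]; exact K.g_zero_left Y

lemma g_neg_left (X Y : Derivation ℝ C C) : K.g (-X) Y = -K.g X Y := by
  have := K.g_smul_left (-1) X Y
  simpa using this

lemma g_neg_right (X Y : Derivation ℝ C C) : K.g X (-Y) = -K.g X Y := by
  rw [K.g_symm, g_neg_left, K.g_symm]

lemma g_sub_left (X Y Z : Derivation ℝ C C) : K.g (X - Y) Z = K.g X Z - K.g Y Z := by
  rw [sub_eq_add_neg, K.g_add_left, g_neg_left, sub_eq_add_neg]

lemma g_sub_right (X Y Z : Derivation ℝ C C) : K.g X (Y - Z) = K.g X Y - K.g X Z := by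
  rw [K.g_symm, g_sub_left, K.g_symm Y, K.g_symm Z]

lemma g_sum_left {ι : Type*} (s : Finset ι) (f : ι → C) (V : ι → Derivation ℝ C C)
    (Y : Derivation ℝ C C) :
    K.g (∑ i ∈ s, f i • V i) Y = ∑ i ∈ s, f i * K.g (V i) Y := by
  classical
  induction s using Finset.induction with
  | empty => simpa using K.g_zero_left Y
  | insert _ _ hx ih =>
    rw [Finset.sum_insert hx, Finset.sum_insert hx, K.g_add_left, K.g_smul_left, ih]

lemma g_sum_right {ι : Type*} (s : Finset ι) (f : ι → C) (V : ι → Derivation ℝ C C)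
    (Y : Derivation ℝ C C) :
    K.g Y (∑ i ∈ s, f i • V i) = ∑ i ∈ s, f i * K.g Y (V i) := by
  rw [K.g_symm, g_sum_left]
  exact Finset.sum_congr rfl fun i _ => by rw [K.g_symm]

lemma sum_apply {ι : Type*} (s : Finset ι) (D : ι → Derivation ℝ C C) (c : C) :
    (∑ i ∈ s, D i) c = ∑ i ∈ s, D i c := by
  classical
  induction s using Finset.induction with
  | empty => simp
  | insert _ _ hx ih => rw [Finset.sum_insert hx, Finset.sum_insert hx, Derivation.add_apply, ih]

/-- expansion of a derivation applied to an element, via the frame -/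
lemma expand_apply (X : Derivation ℝ C C) (c : C) :
    X c = ∑ i, K.g X (K.e i) * K.e i c := by
  conv_lhs => rw [K.frame_span X]
  rw [sum_apply]
  exact Finset.sum_congr rfl fun i _ => by rw [Derivation.smul_apply, smul_eq_mul]

lemma g_xi_xi : K.g K.ξ K.ξ = 1 := by rw [← K.eta_def, K.eta_xi]

lemma eta_add (X Y : Derivation ℝ C C) : K.η (X + Y) = K.η X + K.η Y := by
  rw [K.eta_def, K.eta_def, K.eta_def, K.g_add_left]

lemma eta_smul (f : C) (X : Derivation ℝ C C) : K.η (f • X) = f * K.η X := by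
  rw [K.eta_def, K.eta_def, K.g_smul_left]

lemma eta_neg (X : Derivation ℝ C C) : K.η (-X) = -K.η X := by
  rw [K.eta_def, K.eta_def, g_neg_left]

lemma eta_sub (X Y : Derivation ℝ C C) : K.η (X - Y) = K.η X - K.η Y := by
  rw [K.eta_def, K.eta_def, K.eta_def, g_sub_left]

lemma nabla_sub_left (X Y Z : Derivation ℝ C C) :
    K.nabla (X - Y) Z = K.nabla X Z - K.nabla Y Z := by
  have h : X - Y = X + (-1 : C) • Y := by rw [neg_one_smul]; abel
  rw [h, K.nabla_add_left, K.nabla_smul_left, neg_one_smul, ← sub_eq_add_neg]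

lemma nabla_neg_left (X Z : Derivation ℝ C C) : K.nabla (-X) Z = -K.nabla X Z := by
  have := nabla_sub_left K 0 X Z
  have h0 : K.nabla (0 : Derivation ℝ C C) Z = 0 := by
    have := K.nabla_smul_left 0 0 Z; simpa using this
  rw [zero_sub] at this
  rw [this, h0, zero_sub]

lemma nabla_zero_left (Z : Derivation ℝ C C) : K.nabla 0 Z = 0 := by
  have := K.nabla_smul_left 0 0 Z; simpa using this

lemma nabla_sub_right (X Y Z : Derivation ℝ C C) :
    K.nabla X (Y - Z) = K.nabla X Y - K.nabla X Z := by
  have h : Y - Z = Y + (-1 : C) • Z := by rw [neg_one_smul]; abel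
  rw [h, K.nabla_add_right, K.nabla_leibniz]
  have : X (-1 : C) = 0 := by
    have : (-1 : C) = algebraMap ℝ C (-1) := by simp
    rw [this, Derivation.map_algebraMap]
  rw [this, zero_smul, zero_add, neg_one_smul, ← sub_eq_add_neg]

lemma nabla_zero_right (X : Derivation ℝ C C) : K.nabla X 0 = 0 := by
  have := K.nabla_leibniz X 0 0; simpa using this

lemma nabla_sum_left {ι : Type*} (s : Finset ι) (f : ι → C) (V : ι → Derivation ℝ C C)
    (Z : Derivation ℝ C C) :
    K.nabla (∑ i ∈ s, f i • V i) Z = ∑ i ∈ s, f i • K.nabla (V i) Z := by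
  classical
  induction s using Finset.induction with
  | empty => simpa using nabla_zero_left K Z
  | insert _ _ hx ih =>
    rw [Finset.sum_insert hx, Finset.sum_insert hx, K.nabla_add_left, K.nabla_smul_left, ih]

lemma bracket_eq (X Y : Derivation ℝ C C) : ⁅X, Y⁆ = K.nabla X Y - K.nabla Y X :=
  (K.torsion_free X Y).symm

lemma deriv_g_frame (X : Derivation ℝ C C) (i j : Fin (2 * n + 1)) :
    X (K.g (K.e i) (K.e j)) = 0 := by
  rw [K.g_frame]
  by_cases h : i = j
  · simp [h]
  · simp [h]

lemma nabla_frame_antisym (X : Derivation ℝ C C) (i j : Fin (2 * n + 1)) :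
    K.g (K.nabla X (K.e i)) (K.e j) + K.g (K.e i) (K.nabla X (K.e j)) = 0 := by
  rw [← K.metric_compat, deriv_g_frame]

/-- The standard antisymmetry cancellation: a double trace of an antisymmetric
matrix against a symmetrised expression vanishes. -/
lemma sum_sum_antisym (a B : Fin (2 * n + 1) → Fin (2 * n + 1) → C)
    (ha : ∀ i j, a i j + a j i = 0) :
    ∑ i, ∑ j, a i j * (B i j + B j i) = 0 := by
  have hswap : ∑ i, ∑ j, a i j * (B i j + B j i)
      = ∑ i, ∑ j, a j i * (B j i + B i j) := Finset.sum_comm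
  apply half_cancel
  nth_rewrite 2 [hswap]
  rw [← Finset.sum_add_distrib]
  refine Finset.sum_eq_zero fun i _ => ?_
  rw [← Finset.sum_add_distrib]
  refine Finset.sum_eq_zero fun j _ => ?_
  have h1 : a j i = -a i j := by linear_combination ha i j
  rw [h1]; ring

end Aux


section Phi

variable {n : ℕ} {C : Type*} [CommRing C] [Algebra ℝ C] (K : KenmotsuManifold n C)

lemma phi_zero : K.φ 0 = 0 := by
  have h := K.phi_linear 1 0 0
  rw [one_smul, add_zero, one_smul] at h
  have := h.symm
  rwa [add_eq_left] at this

lemma phi_smul (f : C) (X : Derivation ℝ C C) : K.φ (f • X) = f • K.φ X := by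
  have h := K.phi_linear f X 0
  rwa [add_zero, phi_zero, add_zero] at h

lemma phi_add (X Y : Derivation ℝ C C) : K.φ (X + Y) = K.φ X + K.φ Y := by
  have h := K.phi_linear 1 X Y
  rwa [one_smul, one_smul] at h

lemma phi_neg (X : Derivation ℝ C C) : K.φ (-X) = -K.φ X := by
  have := phi_smul K (-1) X
  simpa using this

lemma phi_sub (X Y : Derivation ℝ C C) : K.φ (X - Y) = K.φ X - K.φ Y := by
  rw [sub_eq_add_neg, phi_add, phi_neg, ← sub_eq_add_neg]

lemma eta_phi_phi (X : Derivation ℝ C C) : K.η (K.φ (K.φ X)) = 0 := by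
  rw [K.phi_phi, eta_add, eta_neg, eta_smul, K.eta_xi, mul_one, neg_add_cancel]

lemma g_phixi_phi (Z : Derivation ℝ C C) : K.g (K.φ K.ξ) (K.φ Z) = 0 := by
  rw [K.compat_phi, K.eta_xi, one_mul, K.eta_def, K.g_symm, sub_self]

lemma g_phixi (Y : Derivation ℝ C C) :
    K.g (K.φ K.ξ) Y = K.η (K.φ K.ξ) * K.η Y := by
  have hY : Y = K.η Y • K.ξ - K.φ (K.φ Y) := by
    rw [K.phi_phi]; abel
  calc K.g (K.φ K.ξ) Y = K.g (K.φ K.ξ) (K.η Y • K.ξ - K.φ (K.φ Y)) := by rw [← hY]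
    _ = K.η Y * K.g (K.φ K.ξ) K.ξ - K.g (K.φ K.ξ) (K.φ (K.φ Y)) := by
        rw [g_sub_right, g_smul_right]
    _ = K.η Y * K.η (K.φ K.ξ) := by rw [g_phixi_phi, sub_zero, ← K.eta_def]
    _ = K.η (K.φ K.ξ) * K.η Y := mul_comm _ _

lemma phixi_eq : K.φ K.ξ = K.η (K.φ K.ξ) • K.ξ := by
  have h : K.φ K.ξ - K.η (K.φ K.ξ) • K.ξ = 0 := by
    apply K.g_nondeg
    intro Y
    rw [g_sub_left, K.g_smul_left, g_phixi, K.g_symm, ← K.eta_def, sub_self]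
  have := sub_eq_zero.mp h
  exact this

lemma c_mul_c : K.η (K.φ K.ξ) * K.η (K.φ K.ξ) = 0 := by
  set c := K.η (K.φ K.ξ) with hcdef
  have hc : K.φ K.ξ = c • K.ξ := phixi_eq K
  have h1 : K.φ (K.φ K.ξ) = 0 := by
    rw [K.phi_phi, K.eta_xi, one_smul, neg_add_cancel]
  have h2 : K.φ (K.φ K.ξ) = (c * c) • K.ξ := by
    rw [hc, phi_smul, hc, smul_smul]
  have h3 : (c * c) • K.ξ = 0 := by rw [← h2, h1]
  calc c * c = (c * c) * K.g K.ξ K.ξ := by rw [g_xi_xi, mul_one]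
    _ = K.g ((c * c) • K.ξ) K.ξ := by rw [K.g_smul_left]
    _ = 0 := by rw [h3, g_zero_left]

lemma g_nabla_xi_xi (X : Derivation ℝ C C) : K.g (K.nabla X K.ξ) K.ξ = 0 := by
  apply half_cancel
  have h := K.metric_compat X K.ξ K.ξ
  rw [g_xi_xi, Derivation.map_one_eq_zero] at h
  nth_rewrite 2 [K.g_symm] at h
  exact h.symm

lemma eta_nabla_xi (X : Derivation ℝ C C) : K.η (K.nabla X K.ξ) = 0 := by
  rw [K.eta_def]; exact g_nabla_xi_xi K X

lemma c_mul_h (X : Derivation ℝ C C) : K.η (K.φ K.ξ) * K.η (K.φ X) = 0 := by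
  have h := K.compat_phi X K.ξ
  rw [K.eta_xi, mul_one, K.eta_def, sub_self] at h
  calc K.η (K.φ K.ξ) * K.η (K.φ X) = K.η (K.φ K.ξ) * K.g (K.φ X) K.ξ := by rw [← K.eta_def]
    _ = K.g (K.φ X) (K.η (K.φ K.ξ) • K.ξ) := by rw [g_smul_right]
    _ = 0 := by rw [← phixi_eq, h]

lemma c_mul_Xc (X : Derivation ℝ C C) :
    K.η (K.φ K.ξ) * X (K.η (K.φ K.ξ)) = 0 := by
  apply half_cancel
  have h := congrArg X (c_mul_c K)
  rw [Derivation.leibniz, map_zero] at h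
  simpa using h

/-- the basic equality from the Kenmotsu condition with `Y = ξ` -/
lemma phi_nabla_xi (X : Derivation ℝ C C) :
    K.φ (K.nabla X K.ξ) = X (K.η (K.φ K.ξ)) • K.ξ + K.η (K.φ K.ξ) • K.nabla X K.ξ
      - K.η (K.φ X) • K.ξ + K.φ X := by
  have hk := K.kenmotsu X K.ξ
  rw [K.eta_xi, one_smul, ← K.eta_def] at hk
  have h1 : K.nabla X (K.φ K.ξ)
      = X (K.η (K.φ K.ξ)) • K.ξ + K.η (K.φ K.ξ) • K.nabla X K.ξ := by
    conv_lhs => rw [phixi_eq, K.nabla_leibniz]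
  rw [h1] at hk
  have := sub_eq_iff_eq_add.mp hk
  rw [this]; abel

lemma nabla_xi_pre (X : Derivation ℝ C C) :
    K.nabla X K.ξ = X - K.η X • K.ξ - K.η (K.φ K.ξ) • K.φ X := by
  set c := K.η (K.φ K.ξ) with hcdef
  have hc : K.φ K.ξ = c • K.ξ := phixi_eq K
  have ecc : c * c = 0 := c_mul_c K
  have ech : c * K.η (K.φ X) = 0 := c_mul_h K X
  have ecx : c * X c = 0 := c_mul_Xc K X
  have hE1 : K.φ (K.nabla X K.ξ)
      = X c • K.ξ + c • K.nabla X K.ξ - K.η (K.φ X) • K.ξ + K.φ X :=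
    phi_nabla_xi K X
  have h2 : c • K.φ (K.nabla X K.ξ) = c • K.φ X := by
    rw [hE1, smul_add, smul_sub, smul_add, smul_smul, smul_smul, smul_smul]
    rw [ecx, ech, ecc, zero_smul, zero_smul]
    abel
  have h1 := congrArg K.φ hE1
  rw [K.phi_phi, eta_nabla_xi, zero_smul, add_zero] at h1
  rw [phi_add, phi_sub, phi_add, phi_smul, phi_smul, phi_smul, K.phi_phi] at h1
  rw [hc, smul_smul, smul_smul, h2] at h1
  have excc : X c * c = 0 := by rw [mul_comm]; exact ecx
  have ehc : K.η (K.φ X) * c = 0 := by rw [mul_comm]; exact ech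
  rw [excc, ehc, zero_smul] at h1
  refine neg_injective ?_
  rw [h1]; abel

lemma h_eq (X : Derivation ℝ C C) :
    K.η (K.φ X) = X (K.η (K.φ K.ξ)) + K.η (K.φ K.ξ) * K.η X := by
  set c := K.η (K.φ K.ξ) with hcdef
  have hc : K.φ K.ξ = c • K.ξ := phixi_eq K
  have h1 := congrArg K.η (phi_nabla_xi K X)
  rw [eta_add, eta_sub, eta_add, eta_smul, eta_smul, eta_smul, K.eta_xi,
    mul_one, mul_one, eta_nabla_xi, mul_zero, add_zero] at h1
  have h2 : K.η (K.φ (K.nabla X K.ξ)) = X c := by rw [h1]; ring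
  have h3 := congrArg K.η (congrArg K.φ (nabla_xi_pre K X))
  rw [phi_sub, phi_sub, phi_smul, phi_smul, eta_sub, eta_sub, eta_smul, eta_smul,
    eta_phi_phi, mul_zero, sub_zero, h2] at h3
  rw [hc, eta_smul, K.eta_xi, mul_one] at h3
  linear_combination -h3

lemma xi_c : K.ξ (K.η (K.φ K.ξ)) = 0 := by
  have h := h_eq K K.ξ
  rw [K.eta_xi, mul_one] at h
  linear_combination -h

lemma antisym_phi (X Y : Derivation ℝ C C) :
    K.g (K.φ X) Y + K.g (K.φ Y) X
      = K.η X * K.η (K.φ Y) + K.η Y * K.η (K.φ X) := by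
  have h := K.compat_phi X (K.φ Y)
  rw [K.phi_phi] at h
  rw [g_add_right, g_neg_right, g_smul_right, ← K.eta_def] at h
  have h2 : K.g X (K.φ Y) = K.g (K.φ Y) X := K.g_symm _ _
  linear_combination -h - h2

end Phi


section CZero

variable {n : ℕ} {C : Type*} [CommRing C] [Algebra ℝ C] (K : KenmotsuManifold n C)

lemma E6 (X Y : Derivation ℝ C C) :
    X (K.η (K.φ Y)) - K.η (K.φ (K.nabla X Y))
      + K.η (K.φ K.ξ) * K.g X Y - K.η (K.φ K.ξ) * (K.η X * K.η Y) = 0 := by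
  have hk := K.kenmotsu X Y
  have h0 : K.g (K.nabla X (K.φ Y)) K.ξ - K.g (K.φ (K.nabla X Y)) K.ξ
      = K.g (K.φ X) Y * K.g K.ξ K.ξ - K.η Y * K.g (K.φ X) K.ξ := by
    rw [← g_sub_left, hk, g_sub_left, K.g_smul_left, K.g_smul_left]
  rw [g_xi_xi, mul_one] at h0
  simp only [← K.eta_def] at h0
  have hmc := K.metric_compat X (K.φ Y) K.ξ
  simp only [← K.eta_def] at hmc
  have hgx : K.g (K.φ Y) (K.nabla X K.ξ)
      = K.g (K.φ Y) X - K.η X * K.η (K.φ Y)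
        - K.η (K.φ K.ξ) * (K.g Y X - K.η Y * K.η X) := by
    rw [nabla_xi_pre, g_sub_right, g_sub_right, g_smul_right, g_smul_right,
      ← K.eta_def, K.compat_phi]
  have hanti := antisym_phi K X Y
  have hsym : K.g X Y = K.g Y X := K.g_symm X Y
  linear_combination hmc + h0 + hgx + hanti + K.η (K.φ K.ξ) * hsym

lemma hessc (X Y : Derivation ℝ C C) :
    X (Y (K.η (K.φ K.ξ))) - (K.nabla X Y) (K.η (K.φ K.ξ))
      + X (K.η (K.φ K.ξ)) * K.η Y
      + 2 * K.η (K.φ K.ξ) * K.g X Y - 2 * K.η (K.φ K.ξ) * (K.η X * K.η Y) = 0 := by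
  have e6 := E6 K X Y
  have hy := congrArg X (h_eq K Y)
  rw [map_add, Derivation.leibniz, smul_eq_mul, smul_eq_mul] at hy
  have hnab := h_eq K (K.nabla X Y)
  have hetaX : X (K.η Y) = K.η (K.nabla X Y) + K.g Y X - K.η X * K.η Y
      - K.η (K.φ K.ξ) * K.g Y (K.φ X) := by
    have h := K.metric_compat X Y K.ξ
    simp only [← K.eta_def] at h
    rw [nabla_xi_pre, g_sub_right, g_sub_right, g_smul_right, g_smul_right,
      ← K.eta_def] at h
    linear_combination h
  have ecc : K.η (K.φ K.ξ) * K.η (K.φ K.ξ) = 0 := c_mul_c K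
  have hsym : K.g X Y = K.g Y X := K.g_symm X Y
  linear_combination e6 - hy + hnab - K.η (K.φ K.ξ) * hetaX
    + K.g Y (K.φ X) * ecc + K.η (K.φ K.ξ) * hsym

lemma Xc_eta (X Y : Derivation ℝ C C) :
    X (K.η (K.φ K.ξ)) * K.η Y = Y (K.η (K.φ K.ξ)) * K.η X := by
  have h1 := hessc K X Y
  have h2 := hessc K Y X
  have hb : K.nabla X Y (K.η (K.φ K.ξ)) - K.nabla Y X (K.η (K.φ K.ξ))
      = X (Y (K.η (K.φ K.ξ))) - Y (X (K.η (K.φ K.ξ))) := by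
    rw [← Derivation.sub_apply, K.torsion_free, Derivation.commutator_apply]
  have hsym : K.g X Y = K.g Y X := K.g_symm X Y
  linear_combination h1 - h2 + hb - 2 * K.η (K.φ K.ξ) * hsym

lemma Xc_zero (X : Derivation ℝ C C) : X (K.η (K.φ K.ξ)) = 0 := by
  have h := Xc_eta K X K.ξ
  rw [K.eta_xi, mul_one, xi_c, zero_mul] at h
  exact h

lemma c_g (X Y : Derivation ℝ C C) :
    2 * K.η (K.φ K.ξ) * K.g X Y = 2 * K.η (K.φ K.ξ) * (K.η X * K.η Y) := by
  have h := hessc K X Y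
  rw [Xc_zero K Y, map_zero, Xc_zero K (K.nabla X Y), Xc_zero K X, zero_mul] at h
  linear_combination h

lemma sum_g_diag : ∑ i, K.g (K.e i) (K.e i) = ((2 * n + 1 : ℕ) : C) := by
  have h : ∀ i, K.g (K.e i) (K.e i) = 1 := fun i => by rw [K.g_frame]; simp
  rw [Finset.sum_congr rfl fun i _ => h i, Finset.sum_const, Finset.card_univ,
    Fintype.card_fin, nsmul_eq_mul, mul_one]

lemma g_expand_left (X Y : Derivation ℝ C C) :
    K.g X Y = ∑ i, K.g X (K.e i) * K.g (K.e i) Y := by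
  conv_lhs => rw [K.frame_span X]
  rw [g_sum_left]

lemma sum_eta_sq : ∑ i, K.η (K.e i) * K.η (K.e i) = 1 := by
  have h := g_expand_left K K.ξ K.ξ
  rw [g_xi_xi] at h
  calc ∑ i, K.η (K.e i) * K.η (K.e i)
      = ∑ i, K.g K.ξ (K.e i) * K.g (K.e i) K.ξ := by
        refine Finset.sum_congr rfl fun i _ => ?_
        rw [K.eta_def]
        nth_rewrite 1 [K.g_symm (K.e i) K.ξ]
        rfl
    _ = 1 := h.symm

lemma c_zero (hpos : 0 < n) : K.η (K.φ K.ξ) = 0 := by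
  set c := K.η (K.φ K.ξ) with hcdef
  have hsum : ∑ i, (2 * c * K.g (K.e i) (K.e i))
      = ∑ i, (2 * c * (K.η (K.e i) * K.η (K.e i))) :=
    Finset.sum_congr rfl fun i _ => c_g K (K.e i) (K.e i)
  rw [← Finset.mul_sum, ← Finset.mul_sum, sum_g_diag, sum_eta_sq, mul_one] at hsum
  have h4 : ((4 * n : ℕ) : ℝ) • c = 0 := by
    rw [Nat.cast_smul_eq_nsmul, nsmul_eq_mul]
    push_cast at hsum ⊢
    linear_combination hsum
  exact real_cancel (Nat.cast_ne_zero.mpr (by omega)) h4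

end CZero


section Curvature

variable {n : ℕ} {C : Type*} [CommRing C] [Algebra ℝ C] (K : KenmotsuManifold n C)

lemma nabla_neg_right (X Y : Derivation ℝ C C) : K.nabla X (-Y) = -K.nabla X Y := by
  have h := nabla_sub_right K X 0 Y
  rw [zero_sub, nabla_zero_right, zero_sub] at h
  exact h

lemma nabla_xi' (hpos : 0 < n) (X : Derivation ℝ C C) :
    K.nabla X K.ξ = X - K.η X • K.ξ := by
  rw [nabla_xi_pre, c_zero K hpos, zero_smul, sub_zero]

lemma eta_nabla (hpos : 0 < n) (X Y : Derivation ℝ C C) :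
    X (K.η Y) = K.η (K.nabla X Y) + K.g X Y - K.η X * K.η Y := by
  have h := K.metric_compat X Y K.ξ
  simp only [← K.eta_def] at h
  rw [nabla_xi' K hpos, g_sub_right, g_smul_right, ← K.eta_def] at h
  have hsym : K.g X Y = K.g Y X := K.g_symm X Y
  linear_combination h - hsym

lemma Rm_antisym1 (X Y Z : Derivation ℝ C C) : K.Rm X Y Z = -K.Rm Y X Z := by
  simp only [Rm]
  rw [bracket_eq K X Y, bracket_eq K Y X, nabla_sub_left, nabla_sub_left]
  abel

lemma Rm_smul1 (f : C) (X Y Z : Derivation ℝ C C) :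
    K.Rm (f • X) Y Z = f • K.Rm X Y Z := by
  simp only [Rm]
  rw [bracket_eq K (f • X) Y, bracket_eq K X Y]
  rw [K.nabla_smul_left f X (K.nabla Y Z), K.nabla_smul_left f X Z,
    K.nabla_leibniz Y f (K.nabla X Z), K.nabla_smul_left f X Y, K.nabla_leibniz Y f X]
  rw [nabla_sub_left, K.nabla_add_left, nabla_sub_left]
  simp only [K.nabla_smul_left, smul_sub]
  abel

lemma Rm_add1 (X X' Y Z : Derivation ℝ C C) :
    K.Rm (X + X') Y Z = K.Rm X Y Z + K.Rm X' Y Z := by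
  simp only [Rm]
  rw [bracket_eq K (X + X') Y, bracket_eq K X Y, bracket_eq K X' Y]
  rw [K.nabla_add_left X X' (K.nabla Y Z), K.nabla_add_left X X' Z, K.nabla_add_right,
    K.nabla_add_left X X' Y, K.nabla_add_right]
  have h : K.nabla X Y + K.nabla X' Y - (K.nabla Y X + K.nabla Y X')
      = (K.nabla X Y - K.nabla Y X) + (K.nabla X' Y - K.nabla Y X') := by abel
  rw [h, K.nabla_add_left, nabla_sub_left, nabla_sub_left]
  abel

lemma Rm_zero1 (Y Z : Derivation ℝ C C) : K.Rm 0 Y Z = 0 := by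
  have h := Rm_smul1 K 0 0 Y Z
  simpa using h

lemma Rm_smul2 (f : C) (X Y Z : Derivation ℝ C C) :
    K.Rm X (f • Y) Z = f • K.Rm X Y Z := by
  rw [Rm_antisym1, Rm_smul1, Rm_antisym1 K Y X Z, smul_neg, neg_neg]

lemma Rm_add2 (X Y Y' Z : Derivation ℝ C C) :
    K.Rm X (Y + Y') Z = K.Rm X Y Z + K.Rm X Y' Z := by
  rw [Rm_antisym1, Rm_add1, Rm_antisym1 K Y X Z, Rm_antisym1 K Y' X Z]
  abel

lemma Rm_zero2 (X Z : Derivation ℝ C C) : K.Rm X 0 Z = 0 := by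
  have h := Rm_smul2 K 0 X 0 Z
  simpa using h

lemma Rm_smul3 (f : C) (X Y Z : Derivation ℝ C C) :
    K.Rm X Y (f • Z) = f • K.Rm X Y Z := by
  simp only [Rm]
  rw [K.nabla_leibniz Y f Z, K.nabla_add_right, K.nabla_leibniz, K.nabla_leibniz,
    K.nabla_leibniz X f Z, K.nabla_add_right, K.nabla_leibniz, K.nabla_leibniz,
    K.nabla_leibniz ⁅X, Y⁆ f Z, Derivation.commutator_apply, sub_smul]
  rw [smul_sub, smul_sub]
  abel

lemma Rm_add3 (X Y Z Z' : Derivation ℝ C C) :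
    K.Rm X Y (Z + Z') = K.Rm X Y Z + K.Rm X Y Z' := by
  simp only [Rm]
  rw [K.nabla_add_right, K.nabla_add_right, K.nabla_add_right, K.nabla_add_right,
    K.nabla_add_right]
  abel

lemma Rm_zero3 (X Y : Derivation ℝ C C) : K.Rm X Y 0 = 0 := by
  have h := Rm_smul3 K 0 X Y 0
  simpa using h

lemma Rm_sum1 {ι : Type*} (s : Finset ι) (f : ι → C) (V : ι → Derivation ℝ C C)
    (Y Z : Derivation ℝ C C) :
    K.Rm (∑ i ∈ s, f i • V i) Y Z = ∑ i ∈ s, f i • K.Rm (V i) Y Z := by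
  classical
  induction s using Finset.induction with
  | empty => simpa using Rm_zero1 K Y Z
  | insert _ _ hx ih => rw [Finset.sum_insert hx, Finset.sum_insert hx, Rm_add1, Rm_smul1, ih]

lemma Rm_sum2 {ι : Type*} (s : Finset ι) (f : ι → C) (V : ι → Derivation ℝ C C)
    (X Z : Derivation ℝ C C) :
    K.Rm X (∑ i ∈ s, f i • V i) Z = ∑ i ∈ s, f i • K.Rm X (V i) Z := by
  classical
  induction s using Finset.induction with
  | empty => simpa using Rm_zero2 K X Z
  | insert _ _ hx ih => rw [Finset.sum_insert hx, Finset.sum_insert hx, Rm_add2, Rm_smul2, ih]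

lemma Rm_sum3 {ι : Type*} (s : Finset ι) (f : ι → C) (V : ι → Derivation ℝ C C)
    (X Y : Derivation ℝ C C) :
    K.Rm X Y (∑ i ∈ s, f i • V i) = ∑ i ∈ s, f i • K.Rm X Y (V i) := by
  classical
  induction s using Finset.induction with
  | empty => simpa using Rm_zero3 K X Y
  | insert _ _ hx ih => rw [Finset.sum_insert hx, Finset.sum_insert hx, Rm_add3, Rm_smul3, ih]

lemma Rm_xi (hpos : 0 < n) (X Y : Derivation ℝ C C) :
    K.Rm X Y K.ξ = K.η X • Y - K.η Y • X := by
  simp only [Rm]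
  rw [nabla_xi' K hpos Y, nabla_xi' K hpos X, nabla_xi' K hpos ⁅X, Y⁆]
  rw [nabla_sub_right, nabla_sub_right, K.nabla_leibniz, K.nabla_leibniz,
    nabla_xi' K hpos X, nabla_xi' K hpos Y]
  rw [eta_nabla K hpos X Y, eta_nabla K hpos Y X]
  rw [bracket_eq, eta_sub, K.g_symm Y X]
  module

end Curvature


section Bianchi

variable {n : ℕ} {C : Type*} [CommRing C] [Algebra ℝ C] (K : KenmotsuManifold n C)

lemma g_Rm_diag (X Y Z : Derivation ℝ C C) : K.g (K.Rm X Y Z) Z = 0 := by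
  apply half_cancel
  have hXmc := K.metric_compat X (K.nabla Y Z) Z
  have hYmc := K.metric_compat Y (K.nabla X Z) Z
  have hbr := K.metric_compat ⁅X, Y⁆ Z Z
  rw [Derivation.commutator_apply, K.g_symm Z (K.nabla ⁅X, Y⁆ Z)] at hbr
  have hXq := K.metric_compat X Z Z
  rw [K.g_symm Z (K.nabla X Z)] at hXq
  have hYq := K.metric_compat Y Z Z
  rw [K.g_symm Z (K.nabla Y Z)] at hYq
  have hXYq := congrArg X hYq
  rw [map_add] at hXYq
  have hYXq := congrArg Y hXq
  rw [map_add] at hYXq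
  have hswap : K.g (K.nabla Y Z) (K.nabla X Z) = K.g (K.nabla X Z) (K.nabla Y Z) :=
    K.g_symm _ _
  simp only [Rm, g_sub_left]
  linear_combination -2 * hXmc + 2 * hYmc - 2 * hswap + hbr - hXYq + hYXq

lemma g_Rm_skew (X Y Z W : Derivation ℝ C C) :
    K.g (K.Rm X Y Z) W + K.g (K.Rm X Y W) Z = 0 := by
  have h := g_Rm_diag K X Y (Z + W)
  rw [Rm_add3, K.g_add_left, g_add_right, g_add_right] at h
  have hZ := g_Rm_diag K X Y Z
  have hW := g_Rm_diag K X Y W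
  linear_combination h - hZ - hW

end Bianchi

/-- the covariant derivative of the curvature tensor -/
def nablaRm {n : ℕ} {C : Type*} [CommRing C] [Algebra ℝ C] (K : KenmotsuManifold n C)
    (U X Y Z : Derivation ℝ C C) : Derivation ℝ C C :=
  K.nabla U (K.Rm X Y Z) - K.Rm (K.nabla U X) Y Z - K.Rm X (K.nabla U Y) Z
    - K.Rm X Y (K.nabla U Z)

/-- the covariant derivative of the Ricci tensor -/
def nablaSc {n : ℕ} {C : Type*} [CommRing C] [Algebra ℝ C] (K : KenmotsuManifold n C)
    (U X Y : Derivation ℝ C C) : C :=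
  U (K.S X Y) - K.S (K.nabla U X) Y - K.S X (K.nabla U Y)

section Bianchi2

variable {n : ℕ} {C : Type*} [CommRing C] [Algebra ℝ C] (K : KenmotsuManifold n C)

lemma nablaRm_antisym12 (U X Y Z : Derivation ℝ C C) :
    K.nablaRm U X Y Z = -K.nablaRm U Y X Z := by
  simp only [nablaRm]
  rw [Rm_antisym1 K X Y Z, Rm_antisym1 K (K.nabla U X) Y Z,
    Rm_antisym1 K X (K.nabla U Y) Z, Rm_antisym1 K X Y (K.nabla U Z)]
  rw [nabla_neg_right]
  abel

lemma nablaRm_skew (U X Y Z W : Derivation ℝ C C) :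
    K.g (K.nablaRm U X Y Z) W + K.g (K.nablaRm U X Y W) Z = 0 := by
  simp only [nablaRm, g_sub_left]
  have h1 := K.metric_compat U (K.Rm X Y Z) W
  have h2 := K.metric_compat U (K.Rm X Y W) Z
  have h3 := congrArg U (g_Rm_skew K X Y Z W)
  rw [map_add, map_zero] at h3
  have sA := g_Rm_skew K (K.nabla U X) Y Z W
  have sB := g_Rm_skew K X (K.nabla U Y) Z W
  have sC := g_Rm_skew K X Y (K.nabla U Z) W
  have sD := g_Rm_skew K X Y (K.nabla U W) Z
  linear_combination h3 - h1 - h2 - sA - sB - sC - sD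

lemma secondBianchi (U X Y Z : Derivation ℝ C C) :
    K.nablaRm U X Y Z + K.nablaRm X Y U Z + K.nablaRm Y U X Z = 0 := by
  have e1 : ⁅⁅U, X⁆, Y⁆ = -⁅Y, ⁅U, X⁆⁆ := (lie_skew _ _).symm
  have e2 : ⁅⁅X, Y⁆, U⁆ = -⁅U, ⁅X, Y⁆⁆ := (lie_skew _ _).symm
  have e3 : ⁅⁅Y, U⁆, X⁆ = -⁅X, ⁅Y, U⁆⁆ := (lie_skew _ _).symm
  have hJ : ⁅⁅U, X⁆, Y⁆ + ⁅⁅X, Y⁆, U⁆ + ⁅⁅Y, U⁆, X⁆ = (0 : Derivation ℝ C C) := by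
    have h := lie_jacobi Y U X
    rw [e1, e2, e3]
    rw [← neg_add, ← neg_add]
    rw [show ⁅Y, ⁅U, X⁆⁆ + ⁅U, ⁅X, Y⁆⁆ + ⁅X, ⁅Y, U⁆⁆ = 0 from h, neg_zero]
  have key : K.nablaRm U X Y Z + K.nablaRm X Y U Z + K.nablaRm Y U X Z
      = K.nabla (⁅⁅U, X⁆, Y⁆ + ⁅⁅X, Y⁆, U⁆ + ⁅⁅Y, U⁆, X⁆) Z := by
    simp only [nablaRm, Rm, bracket_eq K, nabla_sub_left, nabla_sub_right,
      K.nabla_add_left, K.nabla_add_right]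
    abel
  rw [key, hJ, nabla_zero_left]

end Bianchi2


section Traces

variable {n : ℕ} {C : Type*} [CommRing C] [Algebra ℝ C] (K : KenmotsuManifold n C)

lemma deriv_sum {ι : Type*} (X : Derivation ℝ C C) (s : Finset ι) (f : ι → C) :
    X (∑ i ∈ s, f i) = ∑ i ∈ s, X (f i) := by
  classical
  induction s using Finset.induction with
  | empty => simp
  | insert _ _ hx ih => rw [Finset.sum_insert hx, Finset.sum_insert hx, map_add, ih]

lemma S_smul1 (f : C) (X Y : Derivation ℝ C C) : K.S (f • X) Y = f * K.S X Y := by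
  simp only [S, Rm_smul2 K, K.g_smul_left, Finset.mul_sum]

lemma S_add1 (X X' Y : Derivation ℝ C C) : K.S (X + X') Y = K.S X Y + K.S X' Y := by
  simp only [S, Rm_add2 K, K.g_add_left, Finset.sum_add_distrib]

lemma S_smul2 (f : C) (X Y : Derivation ℝ C C) : K.S X (f • Y) = f * K.S X Y := by
  simp only [S, Rm_smul3 K, K.g_smul_left, Finset.mul_sum]

lemma S_add2 (X Y Y' : Derivation ℝ C C) : K.S X (Y + Y') = K.S X Y + K.S X Y' := by
  simp only [S, Rm_add3 K, K.g_add_left, Finset.sum_add_distrib]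

lemma S_zero1 (Y : Derivation ℝ C C) : K.S 0 Y = 0 := by
  have h := S_smul1 K 0 0 Y; simpa using h

lemma S_zero2 (X : Derivation ℝ C C) : K.S X 0 = 0 := by
  have h := S_smul2 K 0 X 0; simpa using h

lemma S_sum1 {ι : Type*} (s : Finset ι) (f : ι → C) (V : ι → Derivation ℝ C C)
    (Y : Derivation ℝ C C) :
    K.S (∑ i ∈ s, f i • V i) Y = ∑ i ∈ s, f i * K.S (V i) Y := by
  classical
  induction s using Finset.induction with
  | empty => simpa using S_zero1 K Y
  | insert _ _ hx ih => rw [Finset.sum_insert hx, Finset.sum_insert hx, S_add1, S_smul1, ih]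

lemma S_sum2 {ι : Type*} (s : Finset ι) (f : ι → C) (V : ι → Derivation ℝ C C)
    (X : Derivation ℝ C C) :
    K.S X (∑ i ∈ s, f i • V i) = ∑ i ∈ s, f i * K.S X (V i) := by
  classical
  induction s using Finset.induction with
  | empty => simpa using S_zero2 K X
  | insert _ _ hx ih => rw [Finset.sum_insert hx, Finset.sum_insert hx, S_add2, S_smul2, ih]

lemma frame_antisym' (U : Derivation ℝ C C) (i j : Fin (2 * n + 1)) :
    K.g (K.nabla U (K.e i)) (K.e j) + K.g (K.nabla U (K.e j)) (K.e i) = 0 := by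
  have h := nabla_frame_antisym K U i j
  rwa [K.g_symm (K.e i) (K.nabla U (K.e j))] at h

lemma trace_correction1 (U Y Z : Derivation ℝ C C) :
    ∑ i, (K.g (K.Rm (K.nabla U (K.e i)) Y Z) (K.e i)
      + K.g (K.Rm (K.e i) Y Z) (K.nabla U (K.e i))) = 0 := by
  have key : ∀ i, K.g (K.Rm (K.nabla U (K.e i)) Y Z) (K.e i)
      + K.g (K.Rm (K.e i) Y Z) (K.nabla U (K.e i))
      = ∑ j, K.g (K.nabla U (K.e i)) (K.e j)
          * (K.g (K.Rm (K.e i) Y Z) (K.e j) + K.g (K.Rm (K.e j) Y Z) (K.e i)) := by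
    intro i
    have h1 : K.Rm (K.nabla U (K.e i)) Y Z
        = ∑ j, K.g (K.nabla U (K.e i)) (K.e j) • K.Rm (K.e j) Y Z := by
      conv_lhs => rw [K.frame_span (K.nabla U (K.e i))]
      rw [Rm_sum1]
    have h2 : K.g (K.Rm (K.e i) Y Z) (K.nabla U (K.e i))
        = ∑ j, K.g (K.nabla U (K.e i)) (K.e j) * K.g (K.Rm (K.e i) Y Z) (K.e j) := by
      conv_lhs => rw [K.frame_span (K.nabla U (K.e i))]
      rw [g_sum_right]
    rw [h1, g_sum_left, h2, ← Finset.sum_add_distrib]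
    exact Finset.sum_congr rfl fun j _ => by ring
  rw [Finset.sum_congr rfl fun i _ => key i]
  exact sum_sum_antisym _ _ (frame_antisym' K U)

lemma trace_correction2 (U : Derivation ℝ C C) :
    ∑ i, (K.S (K.nabla U (K.e i)) (K.e i) + K.S (K.e i) (K.nabla U (K.e i))) = 0 := by
  have key : ∀ i, K.S (K.nabla U (K.e i)) (K.e i) + K.S (K.e i) (K.nabla U (K.e i))
      = ∑ j, K.g (K.nabla U (K.e i)) (K.e j)
          * (K.S (K.e i) (K.e j) + K.S (K.e j) (K.e i)) := by
    intro i
    have h1 : K.S (K.nabla U (K.e i)) (K.e i)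
        = ∑ j, K.g (K.nabla U (K.e i)) (K.e j) * K.S (K.e j) (K.e i) := by
      conv_lhs => rw [K.frame_span (K.nabla U (K.e i))]
      rw [S_sum1]
    have h2 : K.S (K.e i) (K.nabla U (K.e i))
        = ∑ j, K.g (K.nabla U (K.e i)) (K.e j) * K.S (K.e i) (K.e j) := by
      conv_lhs => rw [K.frame_span (K.nabla U (K.e i))]
      rw [S_sum2]
    rw [h1, h2, ← Finset.sum_add_distrib]
    exact Finset.sum_congr rfl fun j _ => by ring
  rw [Finset.sum_congr rfl fun i _ => key i]
  exact sum_sum_antisym _ _ (frame_antisym' K U)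

lemma contractedNablaRm (U Y Z : Derivation ℝ C C) :
    K.nablaSc U Y Z = ∑ i, K.g (K.nablaRm U (K.e i) Y Z) (K.e i) := by
  have hsplit : ∀ i, U (K.g (K.Rm (K.e i) Y Z) (K.e i))
      = K.g (K.nablaRm U (K.e i) Y Z) (K.e i)
        + (K.g (K.Rm (K.nabla U (K.e i)) Y Z) (K.e i)
            + K.g (K.Rm (K.e i) Y Z) (K.nabla U (K.e i)))
        + K.g (K.Rm (K.e i) (K.nabla U Y) Z) (K.e i)
        + K.g (K.Rm (K.e i) Y (K.nabla U Z)) (K.e i) := by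
    intro i
    have hmc := K.metric_compat U (K.Rm (K.e i) Y Z) (K.e i)
    have hdec : K.nabla U (K.Rm (K.e i) Y Z) = K.nablaRm U (K.e i) Y Z
        + K.Rm (K.nabla U (K.e i)) Y Z + K.Rm (K.e i) (K.nabla U Y) Z
        + K.Rm (K.e i) Y (K.nabla U Z) := by simp only [nablaRm]; abel
    rw [hdec, K.g_add_left, K.g_add_left, K.g_add_left] at hmc
    linear_combination hmc
  have hU : U (K.S Y Z) = ∑ i, U (K.g (K.Rm (K.e i) Y Z) (K.e i)) := by
    simp only [S]; exact deriv_sum U _ _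
  simp only [nablaSc]
  rw [hU, Finset.sum_congr rfl fun i _ => hsplit i]
  rw [Finset.sum_add_distrib, Finset.sum_add_distrib, Finset.sum_add_distrib]
  rw [trace_correction1 K U Y Z]
  simp only [S]
  ring

lemma contractedBianchi1 (X Y Z : Derivation ℝ C C) :
    ∑ i, K.g (K.nablaRm (K.e i) X Y Z) (K.e i)
      = K.nablaSc X Y Z - K.nablaSc Y X Z := by
  have hterm : ∀ i, K.nablaRm (K.e i) X Y Z
      = K.nablaRm X (K.e i) Y Z - K.nablaRm Y (K.e i) X Z := by
    intro i
    have hb := secondBianchi K (K.e i) X Y Z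
    have ha : K.nablaRm X Y (K.e i) Z = -K.nablaRm X (K.e i) Y Z :=
      nablaRm_antisym12 K X Y (K.e i) Z
    have h' : K.nablaRm (K.e i) X Y Z
        + (K.nablaRm X Y (K.e i) Z + K.nablaRm Y (K.e i) X Z) = 0 := by
      rw [← add_assoc]; exact hb
    have h2 := eq_neg_of_add_eq_zero_left h'
    rw [h2, ha]; abel
  rw [Finset.sum_congr rfl fun i _ => by rw [hterm i, g_sub_left]]
  rw [Finset.sum_sub_distrib]
  rw [← contractedNablaRm, ← contractedNablaRm]

lemma contractedNablaRm' (U X V : Derivation ℝ C C) :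
    ∑ j, K.g (K.nablaRm U (K.e j) X (K.e j)) V = -K.nablaSc U X V := by
  have h := contractedNablaRm K U X V
  have hterm : ∀ j, K.g (K.nablaRm U (K.e j) X (K.e j)) V
      = -K.g (K.nablaRm U (K.e j) X V) (K.e j) := by
    intro j
    have hs := nablaRm_skew K U (K.e j) X V (K.e j)
    linear_combination hs
  rw [Finset.sum_congr rfl fun j _ => hterm j, Finset.sum_neg_distrib]
  rw [← h]

lemma traceNablaS (X : Derivation ℝ C C) :
    ∑ j, K.nablaSc X (K.e j) (K.e j) = X K.r := by
  simp only [nablaSc]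
  have hXr : X K.r = ∑ j, X (K.S (K.e j) (K.e j)) := by
    simp only [r]; exact deriv_sum X _ _
  rw [Finset.sum_sub_distrib, Finset.sum_sub_distrib, hXr]
  have h := trace_correction2 K X
  rw [Finset.sum_add_distrib] at h
  linear_combination -h

lemma divS_eq (X : Derivation ℝ C C) :
    X K.r = (∑ i, K.nablaSc (K.e i) X (K.e i)) + ∑ i, K.nablaSc (K.e i) X (K.e i) := by
  have hL : ∑ j, ∑ i, K.g (K.nablaRm (K.e i) X (K.e j) (K.e j)) (K.e i)
      = ∑ j, K.nablaSc X (K.e j) (K.e j) - ∑ j, K.nablaSc (K.e j) X (K.e j) := by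
    rw [← Finset.sum_sub_distrib]
    exact Finset.sum_congr rfl fun j _ => contractedBianchi1 K X (K.e j) (K.e j)
  rw [traceNablaS] at hL
  have hL2 : ∑ j, ∑ i, K.g (K.nablaRm (K.e i) X (K.e j) (K.e j)) (K.e i)
      = ∑ i, K.nablaSc (K.e i) X (K.e i) := by
    rw [Finset.sum_comm]
    refine Finset.sum_congr rfl fun i _ => ?_
    have hterm : ∀ j, K.g (K.nablaRm (K.e i) X (K.e j) (K.e j)) (K.e i)
        = -K.g (K.nablaRm (K.e i) (K.e j) X (K.e j)) (K.e i) := by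
      intro j
      rw [nablaRm_antisym12 K (K.e i) X (K.e j) (K.e j), g_neg_left]
    rw [Finset.sum_congr rfl fun j _ => hterm j, Finset.sum_neg_distrib]
    rw [contractedNablaRm' K (K.e i) X (K.e i), neg_neg]
  rw [hL2] at hL
  linear_combination -hL

end Traces


section Final

variable {n : ℕ} {C : Type*} [CommRing C] [Algebra ℝ C] (K : KenmotsuManifold n C)

lemma sum_eta_deriv (f : C) : ∑ i, K.η (K.e i) * K.e i f = K.ξ f := by
  rw [expand_apply K K.ξ f]
  exact Finset.sum_congr rfl fun i _ => by rw [K.eta_def, K.g_symm (K.e i) K.ξ]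

lemma sum_eta_g (X : Derivation ℝ C C) : ∑ i, K.η (K.e i) * K.g (K.e i) X = K.η X := by
  rw [K.eta_def X, g_expand_left K X K.ξ]
  refine Finset.sum_congr rfl fun i _ => ?_
  rw [K.eta_def (K.e i), K.g_symm (K.e i) X]
  ring

lemma S_xi_formula (hpos : 0 < n) (X : Derivation ℝ C C) :
    K.S X K.ξ = K.η X - K.η X * ((2 * n + 1 : ℕ) : C) := by
  simp only [S]
  have hterm : ∀ i, K.g (K.Rm (K.e i) X K.ξ) (K.e i)
      = K.η (K.e i) * K.g X (K.e i) - K.η X * K.g (K.e i) (K.e i) := by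
    intro i
    rw [Rm_xi K hpos, g_sub_left, K.g_smul_left, K.g_smul_left]
  rw [Finset.sum_congr rfl fun i _ => hterm i, Finset.sum_sub_distrib,
    ← Finset.mul_sum, sum_g_diag]
  have h2 : ∑ i, K.η (K.e i) * K.g X (K.e i) = K.η X := by
    rw [K.eta_def X, g_expand_left K X K.ξ]
    exact Finset.sum_congr rfl fun i _ => by rw [K.eta_def (K.e i)]; ring
  rw [h2]

lemma nablaSc_formula (hpos : 0 < n) (α β : C)
    (hS : ∀ X Y, K.S X Y = α * K.g X Y + β * (K.η X * K.η Y))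
    (U X Y : Derivation ℝ C C) :
    K.nablaSc U X Y = U α * K.g X Y + U β * (K.η X * K.η Y)
      + β * ((K.g U X - K.η U * K.η X) * K.η Y + K.η X * (K.g U Y - K.η U * K.η Y)) := by
  simp only [nablaSc]
  rw [hS X Y, hS (K.nabla U X) Y, hS X (K.nabla U Y)]
  have h0 : U (α * K.g X Y + β * (K.η X * K.η Y))
      = α * U (K.g X Y) + K.g X Y * U α
        + (β * (K.η X * U (K.η Y) + K.η Y * U (K.η X)) + K.η X * K.η Y * U β) := by
    rw [map_add, Derivation.leibniz, Derivation.leibniz, Derivation.leibniz]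
    simp only [smul_eq_mul]
    try ring
  have e1 := K.metric_compat U X Y
  have e2 := eta_nabla K hpos U X
  have e3 := eta_nabla K hpos U Y
  linear_combination h0 + α * e1 + β * K.η X * e3 + β * K.η Y * e2

lemma divS_formula (hpos : 0 < n) (α β : C)
    (hS : ∀ X Y, K.S X Y = α * K.g X Y + β * (K.η X * K.η Y))
    (X : Derivation ℝ C C) :
    ∑ i, K.nablaSc (K.e i) X (K.e i)
      = X α + K.η X * K.ξ β + β * K.η X - 2 * β * K.η X
        + β * K.η X * ((2 * n + 1 : ℕ) : C) := by
  have hterm : ∀ i, K.nablaSc (K.e i) X (K.e i)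
      = K.g X (K.e i) * K.e i α + K.η X * (K.η (K.e i) * K.e i β)
        + β * (K.η (K.e i) * K.g (K.e i) X)
        - 2 * β * K.η X * (K.η (K.e i) * K.η (K.e i))
        + β * K.η X * K.g (K.e i) (K.e i) := by
    intro i
    rw [nablaSc_formula K hpos α β hS]
    ring
  rw [Finset.sum_congr rfl fun i _ => hterm i]
  rw [Finset.sum_add_distrib, Finset.sum_sub_distrib, Finset.sum_add_distrib,
    Finset.sum_add_distrib]
  rw [← Finset.mul_sum, ← Finset.mul_sum, ← Finset.mul_sum, ← Finset.mul_sum]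
  rw [sum_eta_deriv K, sum_eta_g K X, sum_eta_sq K, sum_g_diag K, ← expand_apply K X α]
  ring

end Final

end KenmotsuManifold

open KenmotsuManifold in
/-- On an `η`-Einstein Kenmotsu manifold of dimension `2n+1 > 3`,
the gradient of the scalar curvature satisfies `Dr = ξ(r) ξ`, i.e.
`X(r) = η(X) ξ(r)` for all vector fields `X`. -/
theorem stmt6 {n : ℕ} {C : Type*} [CommRing C] [Algebra ℝ C]
    (K : KenmotsuManifold n C) (hn : 1 < n) (hE : K.IsEtaEinstein)
    (X : Derivation ℝ C C) :
    X K.r = K.η X * K.ξ K.r := by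
  obtain ⟨α, β, hS⟩ := hE
  have hpos : 0 < n := by omega
  -- basic algebraic relations between α, β and r
  have hαβ : α + β = 1 - ((2 * n + 1 : ℕ) : C) := by
    have h1 := hS K.ξ K.ξ
    rw [g_xi_xi, K.eta_xi] at h1
    have h2 := S_xi_formula K hpos K.ξ
    rw [K.eta_xi] at h2
    linear_combination h2 - h1
  have hrfml : K.r = α * ((2 * n + 1 : ℕ) : C) + β := by
    simp only [r]
    have hterm : ∀ i, K.S (K.e i) (K.e i)
        = α * K.g (K.e i) (K.e i) + β * (K.η (K.e i) * K.η (K.e i)) :=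
      fun i => hS (K.e i) (K.e i)
    rw [Finset.sum_congr rfl fun i _ => hterm i, Finset.sum_add_distrib,
      ← Finset.mul_sum, ← Finset.mul_sum, sum_g_diag, sum_eta_sq, mul_one]
  have hder : ∀ W : Derivation ℝ C C, W (((2 * n + 1 : ℕ) : C)) = 0 := fun W =>
    Derivation.map_natCast W (2 * n + 1)
  have hUαβ : ∀ W : Derivation ℝ C C, W α + W β = 0 := by
    intro W
    have h := congrArg W hαβ
    rw [map_add, map_sub, Derivation.map_one_eq_zero, hder, sub_zero] at h
    exact h
  have hUr : ∀ W : Derivation ℝ C C,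
      W K.r = ((2 * n + 1 : ℕ) : C) * W α + W β := by
    intro W
    have h := congrArg W hrfml
    rw [map_add, Derivation.leibniz, hder, smul_zero, zero_add, smul_eq_mul] at h
    exact h
  -- the divergence identity
  have hA : ∀ W : Derivation ℝ C C,
      W K.r = 2 * W α + 2 * K.η W * K.ξ β
        + 2 * β * K.η W * (((2 * n + 1 : ℕ) : C) - 1) := by
    intro W
    have h0 := divS_eq K W
    have h1 := divS_formula K hpos α β hS W
    linear_combination h0 + 2 * h1
  have hB := hUr X
  have hC := hUαβ X
  have hE' := hUr K.ξ
  have hF := hUαβ K.ξ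
  have hD : K.ξ K.r = 2 * K.ξ α + 2 * K.ξ β
      + 2 * β * (((2 * n + 1 : ℕ) : C) - 1) := by
    have h := hA K.ξ
    rw [K.eta_xi] at h
    linear_combination h
  have hAX := hA X
  have hkey : (((2 * n + 1 : ℕ) : C) - 3) * (X K.r - K.η X * K.ξ K.r) = 0 := by
    linear_combination (((2 * n + 1 : ℕ) : C) - 1) * hAX - 2 * hB - 2 * hC
      + 2 * K.η X * hE' + 2 * K.η X * hF
      - K.η X * (((2 * n + 1 : ℕ) : C) - 1) * hD
  have h2le : (2 : ℕ) ≤ 2 * n := by omega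
  have hc2 : ((2 * n - 2 : ℕ) : C) * (X K.r - K.η X * K.ξ K.r) = 0 := by
    rw [Nat.cast_sub h2le]
    push_cast at hkey ⊢
    linear_combination hkey
  have h3 : ((2 * n - 2 : ℕ) : ℝ) • (X K.r - K.η X * K.ξ K.r) = 0 := by
    rw [Nat.cast_smul_eq_nsmul, nsmul_eq_mul]
    exact hc2
  have h4 := real_cancel (Nat.cast_ne_zero.mpr (by omega)) h3
  exact sub_eq_zero.mp h4
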